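/- arXiv:1101.3773 — 4 statements merged into one kernel-verified Lean document; each statement's English description precedes it below -/
import Mathlib

section
/- Let W = {(x,y,z) ∈ ℝ³ : x ≤ 0, y ≤ 0, z ≤ 0} and let W' = {(x,y) ∈ ℝ² : x ≤ 0, y ≤ 0}. Let P = {p₁, …, p_n} be a finite set of points in ℝ³ such that no real number occurs twice among all the coordinates of the points of P, indexed so that the z-coordinates satisfy z(p₁) < z(p₂) < ⋯ < z(p_n). Let p_t' ∈ ℝ² denote the projection of p_t onto the z = 0 plane and let P_t' = {p₁', …, p_t'}. Then the following two assertions are equivalent: (i) there exists a two-coloring of {p₁', …, p_n'} such that for every t ≤ n and every translate of W' that contains at least 12 points of P_t', that translate contains points of both colors among P_t'; (ii) there exists a two-coloring of P such that every translate of W that contains at least 12 points of P contains points of both colors. -/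
/-!
Since the z-coordinates increase with the index, the points lying below a height `c` form a
prefix `p₁, …, p_t`, and every prefix arises this way. Hence the sets of points cut out by
translates of the octant are exactly the sets cut out on the prefixes by translates of the
quadrant, and the two coloring conditions are literally the same condition.
-/

theorem Monotone.exists_prefix_iff_le {α : Type*} [LinearOrder α] {n : ℕ} {f : Fin n → α}
    (hf : Monotone f) (c : α) : ∃ t ≤ n, ∀ i : Fin n, i.val < t ↔ f i ≤ c := by
  by_cases h : ∃ k, c < f k
  · obtain ⟨k, hk, hmin⟩ := WellFounded.has_min wellFounded_lt {k | c < f k} h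
    refine ⟨k, k.is_le', fun i => ⟨fun hi => not_lt.1 fun hci => hmin i hci hi, fun hic => ?_⟩⟩
    by_contra! hki
    exact (hk.trans_le (hf hki)).not_ge hic
  · push Not at h
    exact ⟨n, le_rfl, fun i => iff_of_true i.isLt (h i)⟩

theorem StrictMono.exists_prefix_iff_le {α : Type*} [LinearOrder α] [NoMinOrder α] [Nonempty α]
    {n : ℕ} {f : Fin n → α} (hf : StrictMono f) {t : ℕ} (ht : t ≤ n) :
    ∃ c, ∀ i : Fin n, i.val < t ↔ f i ≤ c := by
  rcases t with _ | t
  · obtain ⟨b, hb⟩ := (Set.finite_range f).bddBelow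
    obtain ⟨c, hc⟩ := exists_lt b
    exact ⟨c, fun i => iff_of_false (Nat.not_lt_zero _) (hc.trans_le (hb ⟨i, rfl⟩)).not_ge⟩
  · refine ⟨f ⟨t, ht⟩, fun i => ?_⟩
    rw [hf.le_iff_le, Fin.le_def, Nat.lt_succ_iff]

section

variable {n : ℕ} {p : Fin n → Fin 3 → ℝ}

theorem exists_prefix_quadrant_iff_octant (hp : Monotone (p · 2)) (v : Fin 3 → ℝ) :
    ∃ t ≤ n, ∃ u : Fin 2 → ℝ, ∀ i : Fin n,
      (p i 0 ≤ v 0 ∧ p i 1 ≤ v 1 ∧ p i 2 ≤ v 2) ↔ (i.val < t ∧ p i 0 ≤ u 0 ∧ p i 1 ≤ u 1) := by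
  obtain ⟨t, ht, hcut⟩ := hp.exists_prefix_iff_le (v 2)
  refine ⟨t, ht, ![v 0, v 1], fun i => ?_⟩
  simp only [hcut, Matrix.cons_val_zero, Matrix.cons_val_one]
  tauto

theorem exists_octant_iff_prefix_quadrant (hp : StrictMono (p · 2)) {t : ℕ} (ht : t ≤ n)
    (u : Fin 2 → ℝ) : ∃ v : Fin 3 → ℝ, ∀ i : Fin n,
      (i.val < t ∧ p i 0 ≤ u 0 ∧ p i 1 ≤ u 1) ↔ (p i 0 ≤ v 0 ∧ p i 1 ≤ v 1 ∧ p i 2 ≤ v 2) := by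
  obtain ⟨c, hcut⟩ := hp.exists_prefix_iff_le ht
  refine ⟨![u 0, u 1, c], fun i => ?_⟩
  simp only [hcut, Matrix.cons_val_zero, Matrix.cons_val_one, Matrix.cons_val_two]
  tauto

end

theorem octant_projection_equivalence_general
    (W : Set (Fin 3 → ℝ)) (hW : W = {q | q 0 ≤ 0 ∧ q 1 ≤ 0 ∧ q 2 ≤ 0})
    (W' : Set (Fin 2 → ℝ)) (hW' : W' = {q | q 0 ≤ 0 ∧ q 1 ≤ 0})
    (n : ℕ) (p : Fin n → (Fin 3 → ℝ))
    (hz : ∀ i j : Fin n, i < j → p i 2 < p j 2) :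
    (∃ χ : Fin n → Bool, ∀ t : ℕ, t ≤ n → ∀ v : Fin 2 → ℝ,
        12 ≤ {i : Fin n | i.val < t ∧ ![p i 0, p i 1] ∈ (v + ·) '' W'}.ncard →
        (∃ i : Fin n, i.val < t ∧ ![p i 0, p i 1] ∈ (v + ·) '' W' ∧ χ i = true) ∧
        (∃ j : Fin n, j.val < t ∧ ![p j 0, p j 1] ∈ (v + ·) '' W' ∧ χ j = false))
    ↔
    (∃ χ : Fin n → Bool, ∀ v : Fin 3 → ℝ,
        12 ≤ {i : Fin n | p i ∈ (v + ·) '' W}.ncard →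
        (∃ i : Fin n, p i ∈ (v + ·) '' W ∧ χ i = true) ∧
        (∃ j : Fin n, p j ∈ (v + ·) '' W ∧ χ j = false)) := by
  have hp : StrictMono (p · 2) := hz
  subst hW hW'
  simp only [Set.image_add_left, Set.mem_preimage, Set.mem_ofPred_eq, Pi.add_apply, Pi.neg_apply,
    neg_add_nonpos_iff, Matrix.cons_val_zero, Matrix.cons_val_one]
  constructor
  · rintro ⟨χ, hχ⟩
    refine ⟨χ, fun v hcard => ?_⟩
    obtain ⟨t, ht, u, htrace⟩ := exists_prefix_quadrant_iff_octant hp.monotone v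
    simp only [htrace] at hcard ⊢
    simpa only [and_assoc] using hχ t ht u hcard
  · rintro ⟨χ, hχ⟩
    refine ⟨χ, fun t ht u hcard => ?_⟩
    obtain ⟨v, htrace⟩ := exists_octant_iff_prefix_quadrant hp ht u
    have hχv := hχ v
    simp only [← htrace] at hχv
    simpa only [and_assoc] using hχv hcard

/-- Reduction of the spatial octant coloring problem to a planar one: for a finite
point set in ℝ³ with pairwise distinct coordinate values, indexed in increasing order
of z-coordinates, a good two-coloring of the projections (good for every prefix, with
respect to translates of the quadrant `W'`) exists if and only if a good two-coloring
of the spatial set (with respect to translates of the octant `W`) exists. -/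
theorem octant_projection_equivalence
    (W : Set (Fin 3 → ℝ)) (hW : W = {q | q 0 ≤ 0 ∧ q 1 ≤ 0 ∧ q 2 ≤ 0})
    (W' : Set (Fin 2 → ℝ)) (hW' : W' = {q | q 0 ≤ 0 ∧ q 1 ≤ 0})
    (n : ℕ) (p : Fin n → (Fin 3 → ℝ))
    (hdist : Function.Injective (fun q : Fin n × Fin 3 => p q.1 q.2))
    (hz : ∀ i j : Fin n, i < j → p i 2 < p j 2) :
    (∃ χ : Fin n → Bool, ∀ t : ℕ, t ≤ n → ∀ v : Fin 2 → ℝ,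
        12 ≤ {i : Fin n | i.val < t ∧ ![p i 0, p i 1] ∈ (v + ·) '' W'}.ncard →
        (∃ i : Fin n, i.val < t ∧ ![p i 0, p i 1] ∈ (v + ·) '' W' ∧ χ i = true) ∧
        (∃ j : Fin n, j.val < t ∧ ![p j 0, p j 1] ∈ (v + ·) '' W' ∧ χ j = false))
    ↔
    (∃ χ : Fin n → Bool, ∀ v : Fin 3 → ℝ,
        12 ≤ {i : Fin n | p i ∈ (v + ·) '' W}.ncard →
        (∃ i : Fin n, p i ∈ (v + ·) '' W ∧ χ i = true) ∧
        (∃ j : Fin n, p j ∈ (v + ·) '' W ∧ χ j = false)) :=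
  octant_projection_equivalence_general W hW W' hW' n p hz
end

section
/- Let W = {(x,y,z) ∈ ℝ³ : x ≤ 0, y ≤ 0, z ≤ 0}. Let P be a finite set of points in ℝ³ such that any two distinct points of P are incomparable in their first two coordinates, i.e., for all distinct p, q ∈ P, either (p's x-coordinate < q's x-coordinate and p's y-coordinate > q's y-coordinate) or (p's x-coordinate > q's x-coordinate and p's y-coordinate < q's y-coordinate). Then there exists a coloring χ : P → {red, blue} such that every translate t + W of W that contains at least 4 points of P contains at least one red point and at least one blue point of P. -/
/-!
Incomparability means that sorting `P` by the first coordinate `x` sorts it backwards by the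
second coordinate, so the points of `P` in a translate `t + W` form an `x`-interval of the points
of `P` with third coordinate at most `t 2`. It therefore suffices to 2-colour points of a line
that arrive one by one (in order of increasing third coordinate) so that, at every moment, every
interval of at least four present points sees both colours, and colours are never changed.

The colouring is kept partial (`none` = uncoloured), with the invariant that two points of equal
label are separated by a coloured point: coloured points alternate and uncoloured points are
isolated, so any four consecutive points contain two consecutive coloured points of different
colours. A new point stays uncoloured unless it has an uncoloured neighbour; then the two are
coloured together, with the colours that continue the alternation around them.
-/

open Finset

theorem Set.mem_uIoo_of_mem_uIcc {β : Type*} [LinearOrder β] {a b c : β} (h : c ∈ Set.uIcc a b)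
    (ha : c ≠ a) (hb : c ≠ b) : c ∈ Set.uIoo a b := by
  rcases le_total a b with hab | hab
  · rw [Set.uIcc_of_le hab] at h
    rw [Set.uIoo_of_le hab]
    exact ⟨h.1.lt_of_ne' ha, h.2.lt_of_ne hb⟩
  · rw [Set.uIcc_of_ge hab] at h
    rw [Set.uIoo_of_ge hab]
    exact ⟨h.1.lt_of_ne' hb, h.2.lt_of_ne ha⟩

theorem Finset.exists_four_lt_of_injOn {α β : Type*} [LinearOrder β] {x : α → β} {I : Finset α}
    (hx : Set.InjOn x I) (hI : 4 ≤ #I) :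
    ∃ a ∈ I, ∃ b ∈ I, ∃ c ∈ I, ∃ d ∈ I, x a < x b ∧ x b < x c ∧ x c < x d := by
  classical
  have hJ : 4 ≤ #(I.image x) := by rwa [card_image_of_injOn hx]
  let e := (I.image x).orderEmbOfFin rfl
  have he (i : Fin #(I.image x)) : ∃ a ∈ I, x a = e i :=
    mem_image.1 ((I.image x).orderEmbOfFin_mem rfl i)
  obtain ⟨a, ha, hea⟩ := he ⟨0, by omega⟩
  obtain ⟨b, hb, heb⟩ := he ⟨1, by omega⟩
  obtain ⟨c, hc, hec⟩ := he ⟨2, by omega⟩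
  obtain ⟨d, hd, hed⟩ := he ⟨3, by omega⟩
  refine ⟨a, ha, b, hb, c, hc, d, hd, ?_, ?_, ?_⟩ <;>
    simp only [hea, heb, hec, hed, OrderEmbedding.lt_iff_lt, Fin.mk_lt_mk] <;> norm_num

namespace LineColoring

variable {α β : Type*} [LinearOrder β]

def IsAlternating (x : α → β) (S : Finset α) (χ : α → Option Bool) : Prop :=
  ∀ p ∈ S, ∀ q ∈ S, x p < x q → χ p = χ q → ∃ r ∈ S, x p < x r ∧ x r < x q ∧ (χ r).isSome

def IsIntervalIn (x : α → β) (D I : Finset α) : Prop :=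
  ∀ p ∈ I, ∀ q ∈ I, ∀ r ∈ D, x p ≤ x r → x r ≤ x q → r ∈ I

def IntervalsBichromatic (x : α → β) (D : Finset α) (χ : α → Option Bool) : Prop :=
  ∀ I ⊆ D, IsIntervalIn x D I → 4 ≤ #I →
    (∃ p ∈ I, χ p = some true) ∧ ∃ p ∈ I, χ p = some false

variable {x : α → β} {S : Finset α} {χ : α → Option Bool}

theorem IntervalsBichromatic.mono {χ' : α → Option Bool} (h : IntervalsBichromatic x S χ)
    (hext : ∀ p ∈ S, ∀ c, χ p = some c → χ' p = some c) : IntervalsBichromatic x S χ' := by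
  intro I hIS hI hcard
  obtain ⟨⟨p, hp, hpc⟩, q, hq, hqc⟩ := h I hIS hI hcard
  exact ⟨⟨p, hp, hext p (hIS hp) _ hpc⟩, q, hq, hext q (hIS hq) _ hqc⟩

namespace IsAlternating

theorem exists_isSome_mem_Icc (h : IsAlternating x S χ) {p q : α} (hp : p ∈ S) (hq : q ∈ S)
    (hpq : x p < x q) : ∃ r ∈ S, x p ≤ x r ∧ x r ≤ x q ∧ (χ r).isSome := by
  by_cases hp' : (χ p).isSome
  · exact ⟨p, hp, le_rfl, hpq.le, hp'⟩
  by_cases hq' : (χ q).isSome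
  · exact ⟨q, hq, hpq.le, le_rfl, hq'⟩
  rw [Option.not_isSome_iff_eq_none] at hp' hq'
  obtain ⟨r, hr, hpr, hrq, hr'⟩ := h p hp q hq hpq (hp'.trans hq'.symm)
  exact ⟨r, hr, hpr.le, hrq.le, hr'⟩

theorem exists_isSome_mem_uIoo (h : IsAlternating x S χ) {p q : α} (hp : p ∈ S) (hq : q ∈ S)
    (hpq : x p ≠ x q) (hχ : χ p = χ q) : ∃ r ∈ S, x r ∈ Set.uIoo (x p) (x q) ∧ (χ r).isSome := by
  rcases hpq.lt_or_gt with hpq | hqp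
  · obtain ⟨r, hr, hpr, hrq, hr'⟩ := h p hp q hq hpq hχ
    exact ⟨r, hr, Set.mem_uIoo_of_lt hpr hrq, hr'⟩
  · obtain ⟨r, hr, hqr, hrp, hr'⟩ := h q hq p hp hqp hχ.symm
    exact ⟨r, hr, Set.mem_uIoo_of_gt hqr hrp, hr'⟩

theorem exists_ne_of_isSome (h : IsAlternating x S χ) {p q : α} (hp : p ∈ S) (hq : q ∈ S)
    (hpq : x p < x q) (hq' : (χ q).isSome) :
    ∃ r ∈ S, x p < x r ∧ x r ≤ x q ∧ (χ r).isSome ∧ χ r ≠ χ p := by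
  obtain ⟨r, hr, hrmin⟩ := (S.filter fun r => x p < x r ∧ x r ≤ x q ∧ (χ r).isSome).exists_min_image
    x ⟨q, mem_filter.2 ⟨hq, hpq, le_rfl, hq'⟩⟩
  obtain ⟨hrS, hpr, hrq, hr'⟩ := mem_filter.1 hr
  refine ⟨r, hrS, hpr, hrq, hr', fun hrp => ?_⟩
  obtain ⟨s, hs, hps, hsr, hs'⟩ := h p hp r hrS hpr hrp.symm
  exact (hrmin s (mem_filter.2 ⟨hs, hps, hsr.le.trans hrq, hs'⟩)).not_gt hsr

theorem intervalsBichromatic (h : IsAlternating x S χ) (hx : Set.InjOn x S) :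
    IntervalsBichromatic x S χ := by
  intro I hIS hI hcard
  obtain ⟨a, ha, b, hb, c, hc, d, hd, hab, hbc, hcd⟩ := exists_four_lt_of_injOn (hx.mono hIS) hcard
  obtain ⟨p, hpS, hap, hpb, hp⟩ := h.exists_isSome_mem_Icc (hIS ha) (hIS hb) hab
  obtain ⟨q, hqS, hcq, hqd, hq⟩ := h.exists_isSome_mem_Icc (hIS hc) (hIS hd) hcd
  obtain ⟨r, hrS, hpr, hrq, hr, hrp⟩ :=
    h.exists_ne_of_isSome hpS hqS ((hpb.trans_lt hbc).trans_le hcq) hq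
  have hpI : p ∈ I := hI a ha b hb p hpS hap hpb
  have hrI : r ∈ I := hI p hpI d hd r hrS hpr.le (hrq.trans hqd)
  obtain ⟨cp, hcp⟩ := Option.isSome_iff_exists.1 hp
  obtain ⟨cr, hcr⟩ := Option.isSome_iff_exists.1 hr
  rw [hcp, hcr, ne_eq, Option.some_inj] at hrp
  cases cp <;> cases cr
  · exact absurd rfl hrp
  · exact ⟨⟨r, hrI, hcr⟩, p, hpI, hcp⟩
  · exact ⟨⟨p, hpI, hcp⟩, r, hrI, hcr⟩
  · exact absurd rfl hrp

theorem erase [DecidableEq α] (h : IsAlternating x S χ) {q : α} (hq : χ q = none) :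
    IsAlternating x (S.erase q) χ := by
  intro p hp p' hp' hpp' hχ
  obtain ⟨r, hr, hpr, hrp', hr'⟩ := h p (mem_of_mem_erase hp) p' (mem_of_mem_erase hp') hpp' hχ
  refine ⟨r, mem_erase.2 ⟨?_, hr⟩, hpr, hrp', hr'⟩
  rintro rfl
  simp [hq] at hr'

/-- The colours to give two adjacent new points `a < b`: `a` must differ from the last coloured
point before it, and `b` from the first coloured point after it. -/
theorem exists_color_pair (h : IsAlternating x S χ) (hx : Set.InjOn x S) {a b : α}
    (hab : x a < x b) (hgap : ∀ r ∈ S, x r < x a ∨ x b < x r) :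
    ∃ c : Bool,
      (∀ p ∈ S, x p < x a → χ p = some c → ∃ r ∈ S, x p < x r ∧ x r < x a ∧ (χ r).isSome) ∧
      (∀ p ∈ S, x b < x p → χ p = some !c → ∃ r ∈ S, x b < x r ∧ x r < x p ∧ (χ r).isSome) := by
  by_cases hL : ∃ l ∈ S, x l < x a ∧ (χ l).isSome
  · obtain ⟨l, hl, hlmax⟩ := (S.filter fun l => x l < x a ∧ (χ l).isSome).exists_max_image x
      (by simpa only [filter_nonempty_iff] using hL)
    obtain ⟨hlS, hla, hl'⟩ := mem_filter.1 hl
    obtain ⟨cl, hcl⟩ := Option.isSome_iff_exists.1 hl'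
    refine ⟨!cl, fun p hp hpa hpc => ⟨l, hlS, ?_, hla, hl'⟩, fun p hp hbp hpc => ?_⟩
    · refine (hlmax p (mem_filter.2 ⟨hp, hpa, by simp [hpc]⟩)).lt_of_ne fun hpl => ?_
      rw [hx hp hlS hpl, hcl, Option.some_inj] at hpc
      exact Bool.not_ne_self cl hpc.symm
    · rw [Bool.not_not] at hpc
      obtain ⟨r, hr, hlr, hrp, hr'⟩ := h l hlS p hp (hla.trans (hab.trans hbp)) (hcl.trans hpc.symm)
      refine ⟨r, hr, (hgap r hr).resolve_left fun hra => ?_, hrp, hr'⟩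
      exact (hlmax r (mem_filter.2 ⟨hr, hra, hr'⟩)).not_gt hlr
  by_cases hR : ∃ r ∈ S, x b < x r ∧ (χ r).isSome
  · obtain ⟨r, hr, hrmin⟩ := (S.filter fun r => x b < x r ∧ (χ r).isSome).exists_min_image x
      (by simpa only [filter_nonempty_iff] using hR)
    obtain ⟨hrS, hbr, hr'⟩ := mem_filter.1 hr
    obtain ⟨cr, hcr⟩ := Option.isSome_iff_exists.1 hr'
    refine ⟨cr, fun p hp hpa hpc => absurd ⟨p, hp, hpa, by simp [hpc]⟩ hL,
      fun p hp hbp hpc => ⟨r, hrS, hbr, ?_, hr'⟩⟩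
    refine (hrmin p (mem_filter.2 ⟨hp, hbp, by simp [hpc]⟩)).lt_of_ne fun hrp => ?_
    rw [← hx hrS hp hrp, hcr, Option.some_inj] at hpc
    exact Bool.not_ne_self cr hpc.symm
  · exact ⟨true, fun p hp hpa hpc => absurd ⟨p, hp, hpa, by simp [hpc]⟩ hL,
      fun p hp hbp hpc => absurd ⟨p, hp, hbp, by simp [hpc]⟩ hR⟩

theorem insert_pair [DecidableEq α] (h : IsAlternating x S χ) (hx : Set.InjOn x S) {a b : α}
    (hab : x a < x b) (hgap : ∀ r ∈ S, x r < x a ∨ x b < x r) :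
    ∃ χ' : α → Option Bool, IsAlternating x (insert a (insert b S)) χ' ∧ ∀ p ∈ S, χ' p = χ p := by
  obtain ⟨c, hleft, hright⟩ := h.exists_color_pair hx hab hgap
  have hne (r : α) (hr : r ∈ S) : r ≠ a ∧ r ≠ b := by
    constructor <;> rintro rfl <;> rcases hgap r hr with h | h <;> order
  set χ' := Function.update (Function.update χ b (some !c)) a (some c)
  have hχa : χ' a = some c := by simp [χ']
  have hχb : χ' b = some !c := by
    simp only [χ', Function.update_of_ne fun hba => hab.ne' (congrArg x hba), Function.update_self]
  have hχS (r : α) (hr : r ∈ S) : χ' r = χ r := by simp [χ', hne r hr]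
  have mem_a : a ∈ insert a (insert b S) := mem_insert_self _ _
  have mem_b : b ∈ insert a (insert b S) := mem_insert_of_mem (mem_insert_self _ _)
  have mem_S {r : α} (hr : r ∈ S) : r ∈ insert a (insert b S) :=
    mem_insert_of_mem (mem_insert_of_mem hr)
  refine ⟨χ', fun p hp q hq hpq hpqχ => ?_, hχS⟩
  simp only [mem_insert] at hp hq
  rcases hp with rfl | rfl | hp <;> rcases hq with rfl | rfl | hq
  · exact absurd hpq (lt_irrefl _)
  · rw [hχa, hχb, Option.some_inj] at hpqχ
    exact absurd hpqχ.symm (Bool.not_ne_self c)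
  · exact ⟨b, mem_b, hab, (hgap q hq).resolve_left hpq.not_gt, by simp [hχb]⟩
  · exact absurd (hpq.trans hab) (lt_irrefl _)
  · exact absurd hpq (lt_irrefl _)
  · rw [hχb, hχS q hq] at hpqχ
    obtain ⟨r, hr, hpr, hrq, hr'⟩ := hright q hq hpq hpqχ.symm
    exact ⟨r, mem_S hr, hpr, hrq, by rwa [hχS r hr]⟩
  · rw [hχa, hχS p hp] at hpqχ
    obtain ⟨r, hr, hpr, hrq, hr'⟩ := hleft p hp hpq hpqχ
    exact ⟨r, mem_S hr, hpr, hrq, by rwa [hχS r hr]⟩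
  · exact ⟨a, mem_a, (hgap p hp).resolve_right hpq.not_gt, hab, by simp [hχa]⟩
  · rw [hχS p hp, hχS q hq] at hpqχ
    obtain ⟨r, hr, hpr, hrq, hr'⟩ := h p hp q hq hpq hpqχ
    exact ⟨r, mem_S hr, hpr, hrq, by rwa [hχS r hr]⟩

theorem insert_none [DecidableEq α] (h : IsAlternating x S χ) {m : α} (hm : m ∉ S)
    (hsep : ∀ q ∈ S, χ q = none → ∃ r ∈ S, x r ∈ Set.uIoo (x q) (x m) ∧ (χ r).isSome) :
    IsAlternating x (insert m S) (Function.update χ m none) := by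
  have hχS (r : α) (hr : r ∈ S) : Function.update χ m none r = χ r :=
    Function.update_of_ne (ne_of_mem_of_not_mem hr hm) _ _
  intro p hp q hq hpq hpqχ
  rw [mem_insert] at hp hq
  rcases hp with rfl | hp <;> rcases hq with rfl | hq
  · exact absurd hpq (lt_irrefl _)
  · rw [Function.update_self, hχS q hq] at hpqχ
    obtain ⟨r, hr, hrI, hr'⟩ := hsep q hq hpqχ.symm
    rw [Set.uIoo_of_gt hpq] at hrI
    exact ⟨r, mem_insert_of_mem hr, hrI.1, hrI.2, by rwa [hχS r hr]⟩
  · rw [Function.update_self, hχS p hp] at hpqχ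
    obtain ⟨r, hr, hrI, hr'⟩ := hsep p hp hpqχ
    rw [Set.uIoo_of_lt hpq] at hrI
    exact ⟨r, mem_insert_of_mem hr, hrI.1, hrI.2, by rwa [hχS r hr]⟩
  · rw [hχS p hp, hχS q hq] at hpqχ
    obtain ⟨r, hr, hpr, hrq, hr'⟩ := h p hp q hq hpq hpqχ
    exact ⟨r, mem_insert_of_mem hr, hpr, hrq, by rwa [hχS r hr]⟩

theorem exists_extension_insert [DecidableEq α] (h : IsAlternating x S χ) {m : α} (hm : m ∉ S)
    (hx : Set.InjOn x ↑(insert m S)) :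
    ∃ χ' : α → Option Bool, IsAlternating x (insert m S) χ' ∧
      ∀ p ∈ S, ∀ c, χ p = some c → χ' p = some c := by
  have hxS : Set.InjOn x S := hx.mono (by simp)
  have hxm (q : α) (hq : q ∈ S) : x q ≠ x m := fun hqm =>
    ne_of_mem_of_not_mem hq hm (hx (by simp [hq]) (by simp) hqm)
  by_cases hnbr : ∃ q ∈ S, χ q = none ∧ ∀ r ∈ S.erase q, x r ∉ Set.uIcc (x q) (x m)
  · obtain ⟨q, hq, hqn, hgap⟩ := hnbr
    have hT := h.erase hqn
    have hxT : Set.InjOn x (S.erase q) := hxS.mono (coe_subset.2 (erase_subset q S))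
    obtain ⟨χ', hχ', hagree⟩ : ∃ χ' : α → Option Bool,
        IsAlternating x (insert q (insert m (S.erase q))) χ' ∧ ∀ p ∈ S.erase q, χ' p = χ p := by
      rcases (hxm q hq).lt_or_gt with hqm | hmq
      · refine hT.insert_pair hxT hqm fun r hr => ?_
        simpa only [Set.uIcc_of_le hqm.le, Set.mem_Icc, not_and_or, not_le] using hgap r hr
      · rw [insert_comm]
        refine hT.insert_pair hxT hmq fun r hr => ?_
        simpa only [Set.uIcc_of_ge hmq.le, Set.mem_Icc, not_and_or, not_le] using hgap r hr
    rw [insert_comm, insert_erase hq] at hχ'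
    refine ⟨χ', hχ', fun p hp c hpc => ?_⟩
    have hpq : p ≠ q := by
      rintro rfl
      simp [hqn] at hpc
    rw [hagree p (mem_erase.2 ⟨hpq, hp⟩), hpc]
  · push Not at hnbr
    refine ⟨Function.update χ m none, h.insert_none hm fun q hq hqn => ?_, fun p hp c hpc => ?_⟩
    · obtain ⟨r, hr, hrI⟩ := hnbr q hq hqn
      obtain ⟨hrq, hrS⟩ := mem_erase.1 hr
      have hxrq : x r ≠ x q := fun h => hrq (hxS hrS hq h)
      have hrI' := Set.mem_uIoo_of_mem_uIcc hrI hxrq (hxm r hrS)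
      by_cases hr' : (χ r).isSome
      · exact ⟨r, hrS, hrI', hr'⟩
      rw [Option.not_isSome_iff_eq_none] at hr'
      obtain ⟨s, hs, hsI, hs'⟩ := h.exists_isSome_mem_uIoo hq hrS hxrq.symm (hqn.trans hr'.symm)
      exact ⟨s, hs, Set.uIoo_subset_Ioo Set.left_mem_uIcc hrI hsI, hs'⟩
    · rwa [Function.update_of_ne (ne_of_mem_of_not_mem hp hm)]

end IsAlternating

theorem exists_isAlternating_forall_intervalsBichromatic {γ : Type*} [LinearOrder γ]
    [DecidableEq α] (x : α → β) (f : α → γ) (S : Finset α) (hx : Set.InjOn x S) :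
    ∃ χ : α → Option Bool, IsAlternating x S χ ∧
      ∀ c, IntervalsBichromatic x (S.filter (f · ≤ c)) χ := by
  induction S using Finset.induction_on_max_value f with
  | empty =>
    refine ⟨fun _ => none, fun p hp => by simp at hp, fun c I hI _ hcard => ?_⟩
    simp only [filter_empty, subset_empty] at hI
    simp [hI] at hcard
  | insert m S hm hmax ih =>
    obtain ⟨χ, hχ, hwin⟩ := ih (hx.mono (by simp))
    obtain ⟨χ', hχ', hext⟩ := hχ.exists_extension_insert hm hx
    refine ⟨χ', hχ', fun c => ?_⟩
    by_cases hmc : f m ≤ c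
    · rw [filter_true_of_mem fun p hp => ?_]
      · exact hχ'.intervalsBichromatic hx
      rcases mem_insert.1 hp with rfl | hp
      exacts [hmc, (hmax p hp).trans hmc]
    · rw [filter_insert, if_neg hmc]
      exact (hwin c).mono fun p hp => hext p (mem_of_mem_filter p hp)

end LineColoring

theorem coe_inter_image_add_octant (P : Finset (Fin 3 → ℝ)) (t : Fin 3 → ℝ) :
    (P : Set (Fin 3 → ℝ)) ∩ (t + ·) '' {q | q 0 ≤ 0 ∧ q 1 ≤ 0 ∧ q 2 ≤ 0} =
      ↑(P.filter fun p => p 0 ≤ t 0 ∧ p 1 ≤ t 1 ∧ p 2 ≤ t 2) := by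
  ext p
  simp [Set.image_add_left]

theorem injOn_apply_zero_of_incomparable {P : Finset (Fin 3 → ℝ)}
    (hinc : ∀ p ∈ P, ∀ q ∈ P, p ≠ q → (p 0 < q 0 ∧ q 1 < p 1) ∨ (q 0 < p 0 ∧ p 1 < q 1)) :
    Set.InjOn (· 0) (P : Set (Fin 3 → ℝ)) := by
  intro p hp q hq hpq
  by_contra hne
  rcases hinc p hp q hq hne with h | h
  exacts [h.1.ne hpq, h.1.ne' hpq]

theorem isIntervalIn_filter_of_incomparable {P : Finset (Fin 3 → ℝ)}
    (hinc : ∀ p ∈ P, ∀ q ∈ P, p ≠ q → (p 0 < q 0 ∧ q 1 < p 1) ∨ (q 0 < p 0 ∧ p 1 < q 1))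
    (t : Fin 3 → ℝ) :
    LineColoring.IsIntervalIn (· 0) (P.filter (· 2 ≤ t 2))
      (P.filter fun p => p 0 ≤ t 0 ∧ p 1 ≤ t 1 ∧ p 2 ≤ t 2) := by
  intro p hp q hq r hr hpr hrq
  simp only [mem_filter] at hp hq hr ⊢
  refine ⟨hr.1, hrq.trans hq.2.1, ?_, hr.2⟩
  rcases eq_or_ne p r with rfl | hne
  · exact hp.2.2.1
  rcases hinc p hp.1 r hr.1 hne with h | h
  · exact h.2.le.trans hp.2.2.1
  · exact absurd hpr h.1.not_ge

/-- If the points of a finite set in ℝ³ are pairwise incomparable in their first two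
coordinates, then the set can be two-colored so that every translate of the octant
`W = {(x,y,z) : x ≤ 0, y ≤ 0, z ≤ 0}` containing at least 4 of the points contains
points of both colors. -/
theorem octant_incomparable_coloring_four
    (W : Set (Fin 3 → ℝ)) (hW : W = {q | q 0 ≤ 0 ∧ q 1 ≤ 0 ∧ q 2 ≤ 0})
    (P : Finset (Fin 3 → ℝ))
    (hinc : ∀ p ∈ P, ∀ q ∈ P, p ≠ q →
      (p 0 < q 0 ∧ q 1 < p 1) ∨ (q 0 < p 0 ∧ p 1 < q 1)) :
    ∃ χ : (Fin 3 → ℝ) → Bool, ∀ t : Fin 3 → ℝ,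
      4 ≤ ((P : Set (Fin 3 → ℝ)) ∩ (t + ·) '' W).ncard →
      (∃ p ∈ (P : Set (Fin 3 → ℝ)) ∩ (t + ·) '' W, χ p = true) ∧
      (∃ q ∈ (P : Set (Fin 3 → ℝ)) ∩ (t + ·) '' W, χ q = false) := by
  classical
  subst hW
  obtain ⟨χ, -, hχ⟩ := LineColoring.exists_isAlternating_forall_intervalsBichromatic (· 0) (· 2) P
    (injOn_apply_zero_of_incomparable hinc)
  refine ⟨fun p => (χ p).getD true, fun t ht => ?_⟩
  rw [coe_inter_image_add_octant] at ht ⊢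
  rw [Set.ncard_coe_finset] at ht
  obtain ⟨⟨p, hp, hpt⟩, q, hq, hqf⟩ := hχ (t 2) _ (monotone_filter_right P fun _ _ hp => hp.2.2)
    (isIntervalIn_filter_of_incomparable hinc t) ht
  exact ⟨⟨p, hp, by simp [hpt]⟩, q, hq, by simp [hqf]⟩
end

section
/- There exists a set P of 10 points in ℝ² and a nondegenerate triangle T in ℝ² such that for every coloring χ : P → {red, blue} there exists a translate t + T of T whose intersection with P consists of exactly 3 points, all of the same color. -/
/-!
The triangle is the right isosceles triangle with legs of length 264 along the axes, and the ten
points have integer coordinates. Membership of a lattice point in a lattice translate of this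
triangle is a system of three linear inequalities over `ℤ`, so which points a given translate
captures is computable. Eleven translates each capture exactly three of the points, and the
resulting 3-uniform hypergraph admits no proper 2-colouring; both facts are checked by `decide`.
-/

namespace TriangleTranslates

open Set

theorem affineIndependent_corner {a : ℝ} (ha : a ≠ 0) :
    AffineIndependent ℝ ![0, ![a, 0], ![0, a]] :=
  affineIndependent_of_ne_of_mem_of_notMem_of_mem
    (s := (LinearMap.ker (LinearMap.proj 0 : (Fin 2 → ℝ) →ₗ[ℝ] ℝ)).toAffineSubspace)
    (by simpa [funext_iff, Fin.forall_fin_two] using ha.symm) (by simp) (by simpa using ha)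
    (by simp)

theorem convexHull_corner {a : ℝ} (ha : 0 < a) :
    convexHull ℝ {0, ![a, 0], ![0, a]} =
      {q : Fin 2 → ℝ | 0 ≤ q 0 ∧ 0 ≤ q 1 ∧ q 0 + q 1 ≤ a} := by
  apply subset_antisymm
  · refine convexHull_min ?_ ?_
    · rintro q (rfl | rfl | rfl) <;> simp [ha.le]
    · rintro x ⟨hx0, hx1, hx⟩ y ⟨hy0, hy1, hy⟩ s t hs ht hst
      simp only [mem_ofPred_eq, Pi.add_apply, Pi.smul_apply, smul_eq_mul]
      exact ⟨by positivity, by positivity, by nlinarith⟩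
  · rintro q ⟨h0, h1, h01⟩
    have hq : q =
        ∑ i, ![1 - (q 0 + q 1) / a, q 0 / a, q 1 / a] i • ![0, ![a, 0], ![0, a]] i := by
      ext i; fin_cases i <;> simp [Fin.sum_univ_three] <;> field_simp
    rw [hq]
    refine (convex_convexHull ℝ _).sum_mem (fun i _ => ?_) ?_
      (fun i _ => subset_convexHull ℝ _ ?_)
    · fin_cases i <;> simp [div_le_one ha, h01] <;> positivity
    · simp [Fin.sum_univ_three]; field_simp; ring
    · fin_cases i <;> simp

def toPlane : ℤ × ℤ ↪ (Fin 2 → ℝ) where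
  toFun z := ![z.1, z.2]
  inj' z w h := by
    have h0 := congrFun h 0
    have h1 := congrFun h 1
    simp only [Matrix.cons_val_zero, Matrix.cons_val_one, Int.cast_inj] at h0 h1
    exact Prod.ext h0 h1

@[simp] theorem toPlane_apply_zero (z : ℤ × ℤ) : toPlane z 0 = z.1 := rfl

@[simp] theorem toPlane_apply_one (z : ℤ × ℤ) : toPlane z 1 = z.2 := rfl

def capturedBy (S : Finset (ℤ × ℤ)) (a : ℤ) (s : ℤ × ℤ) : Finset (ℤ × ℤ) :=
  S.filter fun z => s.1 ≤ z.1 ∧ s.2 ≤ z.2 ∧ z.1 - s.1 + (z.2 - s.2) ≤ a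

theorem toPlane_mem_translate_corner_iff {a : ℤ} (ha : 0 < a) (s z : ℤ × ℤ) :
    toPlane z ∈ (toPlane s + ·) '' convexHull ℝ {0, ![(a : ℝ), 0], ![0, (a : ℝ)]} ↔
      s.1 ≤ z.1 ∧ s.2 ≤ z.2 ∧ z.1 - s.1 + (z.2 - s.2) ≤ a := by
  rw [image_add_left, mem_preimage, convexHull_corner (by exact_mod_cast ha)]
  simp only [mem_ofPred_eq, ← sub_eq_neg_add, Pi.sub_apply, toPlane_apply_zero,
    toPlane_apply_one, sub_nonneg]
  norm_cast

theorem inter_translate_corner {a : ℤ} (ha : 0 < a) (S : Finset (ℤ × ℤ)) (s : ℤ × ℤ) :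
    ↑(S.map toPlane) ∩
        (toPlane s + ·) '' convexHull ℝ {0, ![(a : ℝ), 0], ![0, (a : ℝ)]} =
      toPlane '' ↑(capturedBy S a s) := by
  ext p
  simp only [Finset.coe_map, mem_inter_iff, mem_image, Finset.mem_coe, capturedBy,
    Finset.mem_filter]
  constructor
  · rintro ⟨⟨z, hz, rfl⟩, hp⟩
    exact ⟨z, ⟨hz, (toPlane_mem_translate_corner_iff ha s z).1 hp⟩, rfl⟩
  · rintro ⟨z, ⟨hz, hzs⟩, rfl⟩
    exact ⟨⟨z, hz, rfl⟩, (toPlane_mem_translate_corner_iff ha s z).2 hzs⟩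

def points : Finset (ℤ × ℤ) :=
  {(48, 44), (72, 252), (152, 156), (180, 344), (188, 140),
    (216, 56), (276, 264), (312, 44), (372, 120), (388, 148)}

def offsets : Finset (ℤ × ℤ) :=
  {(72, 140), (72, 252), (152, 156), (124, 148), (152, 76), (180, 80),
    (153, 121), (153, 44), (188, 140), (216, 56), (312, 44)}

theorem exists_offset_capturedBy_subset_or_subset_sdiff :
    ∀ R ∈ points.powerset, ∃ s ∈ offsets, (capturedBy points 264 s).card = 3 ∧
      (capturedBy points 264 s ⊆ R ∨ capturedBy points 264 s ⊆ points \ R) := by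
  decide +kernel

theorem exists_capturedBy_monochromatic (χ : ℤ × ℤ → Bool) :
    ∃ s, (capturedBy points 264 s).card = 3 ∧
      ∃ b, ∀ z ∈ capturedBy points 264 s, χ z = b := by
  obtain ⟨s, -, hcard, hred | hblue⟩ := exists_offset_capturedBy_subset_or_subset_sdiff
    (points.filter (χ · = true)) (Finset.mem_powerset.2 (Finset.filter_subset _ _))
  · exact ⟨s, hcard, true, fun z hz => (Finset.mem_filter.1 (hred hz)).2⟩
  · refine ⟨s, hcard, false, fun z hz => ?_⟩
    obtain ⟨hz, hnot⟩ := Finset.mem_sdiff.1 (hblue hz)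
    simpa [hz] using hnot

end TriangleTranslates

open TriangleTranslates in
/-- There is a 10-point planar set and a nondegenerate triangle such that in any
two-coloring of the set there is a translate of the triangle containing exactly
3 points of the set, all of the same color. -/
theorem triangle_translates_lower_bound_ten_points :
    ∃ (P : Finset (Fin 2 → ℝ)) (A B C : Fin 2 → ℝ),
      P.card = 10 ∧ AffineIndependent ℝ ![A, B, C] ∧
      ∀ χ : (Fin 2 → ℝ) → Bool, ∃ t : Fin 2 → ℝ,
        ((P : Set (Fin 2 → ℝ)) ∩ (t + ·) '' (convexHull ℝ {A, B, C})).ncard = 3 ∧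
        ∃ b : Bool, ∀ p ∈ (P : Set (Fin 2 → ℝ)) ∩ (t + ·) '' (convexHull ℝ {A, B, C}),
          χ p = b := by
  refine ⟨points.map toPlane, 0, ![((264 : ℤ) : ℝ), 0], ![0, ((264 : ℤ) : ℝ)],
    by rw [Finset.card_map]; rfl, affineIndependent_corner (by norm_num), fun χ => ?_⟩
  obtain ⟨s, hcard, b, hb⟩ := exists_capturedBy_monochromatic (χ ∘ toPlane)
  refine ⟨toPlane s, ?_, b, ?_⟩ <;> rw [inter_translate_corner (by norm_num)]
  · rw [Set.ncard_image_of_injective _ toPlane.injective, Set.ncard_coe_finset, hcard]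
  · rintro _ ⟨z, hz, rfl⟩
    exact hb z hz
end

section
/- There exists a nondegenerate triangle T in ℝ², a finite index set I, a family (t_i + T)_{i ∈ I} of translates of T, and a finite set S ⊆ ℝ² such that every point of S belongs to at least 3 of the sets t_i + T (counted with multiplicity of the index), yet for every partition of I into two sets I₁ and I₂ there exists a point of S that is not covered by any t_i + T with i ∈ I₁ or is not covered by any t_j + T with j ∈ I₂. In other words, there is an indecomposable 3-fold covering of a finite planar point set by translates of a triangle. -/
/-!
Nine translates of the triangle with vertices `0, (1000, 0), (0, 1000)` and eleven points are
placed so that each point lies in exactly three translates. The eleven triples of translates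
form a 3-uniform hypergraph on nine vertices with no 2-colouring free of monochromatic edges.
A decomposition of the covering into two coverings would be such a colouring.
-/

open Finset

section CornerTriangle

variable {a : ℝ}

theorem convexHull_cornerTriangle (ha : 0 < a) :
    convexHull ℝ {0, ![a, 0], ![0, a]} =
      {p : Fin 2 → ℝ | 0 ≤ p 0 ∧ 0 ≤ p 1 ∧ p 0 + p 1 ≤ a} := by
  apply Set.Subset.antisymm
  · refine convexHull_min ?_ ?_
    · rintro _ (rfl | rfl | rfl) <;> simp [ha.le]
    · rintro x ⟨hx0, hx1, hx⟩ y ⟨hy0, hy1, hy⟩ s t hs ht hst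
      simp only [Set.mem_ofPred_eq, Pi.add_apply, Pi.smul_apply, smul_eq_mul]
      exact ⟨by positivity, by positivity, by nlinarith⟩
  · rintro p ⟨h0, h1, h⟩
    -- `a` times the barycentric coordinates of `p`
    set w : Fin 3 → ℝ := ![a - p 0 - p 1, p 0, p 1]
    have hw : ∀ i ∈ univ, 0 ≤ w i := by
      intro i _
      fin_cases i <;> simp [w] <;> linarith
    have hsum : ∑ i, w i = a := by
      simp only [w, Fin.sum_univ_three, Matrix.cons_val_zero, Matrix.cons_val_one, Matrix.cons_val]
      ring
    have hp := univ.centerMass_mem_convexHull hw (hsum ▸ ha)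
      (z := ![0, ![a, 0], ![0, a]]) (s := {0, ![a, 0], ![0, a]})
      (by intro i _; fin_cases i <;> simp)
    convert hp using 1
    ext j
    fin_cases j <;> simp [centerMass, hsum, Fin.sum_univ_three, w] <;> field_simp

theorem affineIndependent_cornerTriangle (ha : a ≠ 0) :
    AffineIndependent ℝ ![0, ![a, 0], ![0, a]] := by
  rw [affineIndependent_iff_of_fintype]
  intro w hw hv
  rw [univ.weightedVSub_eq_linear_combination hw, Fin.sum_univ_three] at hv
  rw [Fin.sum_univ_three] at hw
  have h1 : w 1 * a = 0 := by simpa using congrFun hv 0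
  have h2 : w 2 * a = 0 := by simpa using congrFun hv 1
  simp only [mul_eq_zero, ha, or_false] at h1 h2
  have h0 : w 0 = 0 := by linarith
  intro i
  fin_cases i <;> assumption

theorem mem_image_add_cornerTriangle_iff (ha : 0 < a) (t p : Fin 2 → ℝ) :
    p ∈ (t + ·) '' convexHull ℝ {0, ![a, 0], ![0, a]} ↔
      t 0 ≤ p 0 ∧ t 1 ≤ p 1 ∧ p 0 + p 1 ≤ t 0 + t 1 + a := by
  rw [Set.image_add_left, Set.mem_preimage, convexHull_cornerTriangle ha]
  simp only [Set.mem_ofPred_eq, Pi.add_apply, Pi.neg_apply]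
  constructor <;> rintro ⟨h0, h1, h⟩ <;> exact ⟨by linarith, by linarith, by linarith⟩

end CornerTriangle

def IsTwoColorable {ι κ : Type*} (E : κ → Set ι) : Prop :=
  ∃ I : Set ι, ∀ k, ¬E k ⊆ I ∧ ¬E k ⊆ Iᶜ

theorem exists_forall_not_mem_of_not_isTwoColorable {ι κ α : Type*} {P : ι → Set α}
    {p : κ → α} {E : κ → Set ι} (hE : ∀ k, {i | p k ∈ P i} ⊆ E k) (hcol : ¬IsTwoColorable E)
    (I : Set ι) : (∃ k, ∀ i ∈ I, p k ∉ P i) ∨ ∃ k, ∀ i ∈ Iᶜ, p k ∉ P i := by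
  obtain ⟨k, hk | hk⟩ : ∃ k, E k ⊆ I ∨ E k ⊆ Iᶜ := by
    by_contra! h
    exact hcol ⟨I, h⟩
  · exact Or.inr ⟨k, fun i hi hp => hi (hk (hE k hp))⟩
  · exact Or.inl ⟨k, fun i hi hp => hk (hE k hp) hi⟩

namespace TriangleConfiguration

def shift : Fin 9 → Fin 2 → ℤ :=
  ![![1020, 0], ![220, 140], ![300, 560], ![1000, 690], ![600, 150],
    ![160, 1090], ![470, 170], ![150, 920], ![1110, 370]]

def point : Fin 11 → Fin 2 → ℤ :=
  ![![1110, 920], ![1000, 690], ![1109, 690], ![1020, 150], ![1110, 689],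
    ![1020, 920], ![600, 1089], ![470, 560], ![1110, 1090], ![1020, 370], ![300, 1090]]

def incidences : Fin 11 → Finset (Fin 9) :=
  ![{3, 7, 8}, {2, 3, 4}, {0, 2, 3}, {0, 1, 4}, {0, 2, 8}, {0, 3, 7},
    {2, 4, 7}, {1, 2, 6}, {3, 5, 8}, {0, 4, 6}, {2, 5, 7}]

theorem card_incidences (k : Fin 11) : (incidences k).card = 3 := by
  revert k
  decide

theorem le_and_le_and_le_iff_mem_incidences (k : Fin 11) (i : Fin 9) :
    (shift i 0 ≤ point k 0 ∧ shift i 1 ≤ point k 1 ∧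
        point k 0 + point k 1 ≤ shift i 0 + shift i 1 + 1000) ↔ i ∈ incidences k := by
  revert k i
  decide

set_option maxRecDepth 10000 in
theorem exists_incidences_subset_or_subset_compl (I : Finset (Fin 9)) :
    ∃ k, incidences k ⊆ I ∨ incidences k ⊆ Iᶜ := by
  revert I
  decide

theorem not_isTwoColorable_incidences : ¬IsTwoColorable fun k => (incidences k : Set (Fin 9)) := by
  classical
  rintro ⟨I, hI⟩
  obtain ⟨k, hk | hk⟩ := exists_incidences_subset_or_subset_compl I.toFinset
  · exact (hI k).1 (by simpa [← Finset.coe_subset] using hk)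
  · exact (hI k).2 (by simpa [← Finset.coe_subset] using hk)

theorem coverers_eq (k : Fin 11) :
    {i | (Int.cast ∘ point k : Fin 2 → ℝ) ∈
        (Int.cast ∘ shift i + ·) '' convexHull ℝ {0, ![1000, 0], ![0, 1000]}} =
      (incidences k : Set (Fin 9)) := by
  ext i
  rw [Set.mem_ofPred_eq, mem_image_add_cornerTriangle_iff (by norm_num), mem_coe,
    ← le_and_le_and_le_iff_mem_incidences]
  simp only [Function.comp_apply]
  norm_cast

end TriangleConfiguration

open TriangleConfiguration in
/-- There is an indecomposable 3-fold covering of a finite planar point set by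
finitely many translates of a nondegenerate triangle. -/
theorem indecomposable_threefold_triangle_covering :
    ∃ (A B C : Fin 2 → ℝ) (n : ℕ) (t : Fin n → (Fin 2 → ℝ)) (S : Finset (Fin 2 → ℝ)),
      AffineIndependent ℝ ![A, B, C] ∧
      (∀ p ∈ S, 3 ≤ {i : Fin n | p ∈ (t i + ·) '' (convexHull ℝ {A, B, C})}.ncard) ∧
      ∀ I₁ : Set (Fin n),
        (∃ p ∈ S, ∀ i ∈ I₁, p ∉ (t i + ·) '' (convexHull ℝ {A, B, C})) ∨
        (∃ p ∈ S, ∀ i ∈ I₁ᶜ, p ∉ (t i + ·) '' (convexHull ℝ {A, B, C})) := by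
  refine ⟨0, ![1000, 0], ![0, 1000], 9, fun i => Int.cast ∘ shift i,
    univ.image fun k => Int.cast ∘ point k, affineIndependent_cornerTriangle (by norm_num), ?_, ?_⟩
  · rintro _ hp
    obtain ⟨k, -, rfl⟩ := mem_image.1 hp
    rw [coverers_eq, Set.ncard_coe_finset, card_incidences]
  · intro I₁
    have hE k := (coverers_eq k).subset
    obtain ⟨k, hk⟩ | ⟨k, hk⟩ :=
      exists_forall_not_mem_of_not_isTwoColorable hE not_isTwoColorable_incidences I₁
    · exact Or.inl ⟨_, mem_image_of_mem _ (mem_univ k), hk⟩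
    · exact Or.inr ⟨_, mem_image_of_mem _ (mem_univ k), hk⟩
end
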